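/- Let μ ∈ ℝ and σ > 0, and let W be the Gaussian-log-Gaussian mixture distribution W = (gaussianReal μ σ²).bind (fun s => gaussianReal 0 (exp s)). Then the normalized kurtosis ratio satisfies (∫ x⁴ dW(x)) / (3·(∫ x² dW(x))²) = exp(σ²). -/

import Mathlib

open MeasureTheory ProbabilityTheory Real Set
open scoped NNReal ENNReal

section Helpers

lemma even_integral' {f : ℝ → ℝ} (hf : ∀ x, f (-x) = f x) (hi : Integrable f) :
    ∫ x, f x = 2 * ∫ x in Ioi (0:ℝ), f x := by
  rw [← intervalIntegral.integral_Iic_add_Ioi (b := (0:ℝ)) hi.integrableOn hi.integrableOn]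
  have : ∫ x in Iic (0:ℝ), f x = ∫ x in Ioi (0:ℝ), f x := by
    rw [← neg_zero (G := ℝ), ← integral_comp_neg_Ioi]
    simp_rw [hf, neg_zero]
  rw [this]; ring

lemma G2' {b : ℝ} (hb : 0 < b) :
    ∫ x in Ioi (0:ℝ), x ^ 2 * exp (-b * x ^ 2) = √π / (4 * b * √b) := by
  have h := integral_rpow_mul_exp_neg_mul_rpow (p := 2) (q := 2) (b := b)
    two_pos (by norm_num) hb
  simp_rw [Real.rpow_two] at h
  rw [h]
  have hg : Real.Gamma (((2:ℝ)+1)/2) = √π / 2 := by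
    rw [show ((2:ℝ)+1)/2 = 1/2 + 1 by norm_num, Real.Gamma_add_one (by norm_num),
      Real.Gamma_one_half_eq]; ring
  have hb' : b ^ (-((2:ℝ)+1)/2) = (b * √b)⁻¹ := by
    rw [show (-((2:ℝ)+1)/2) = -(1 + 1/2) by norm_num, Real.rpow_neg hb.le,
      Real.rpow_add hb, Real.rpow_one, ← Real.sqrt_eq_rpow]
  have hsb : √b ≠ 0 := (Real.sqrt_pos.mpr hb).ne'
  rw [hg, hb']; field_simp
  norm_num

lemma G4' {b : ℝ} (hb : 0 < b) :
    ∫ x in Ioi (0:ℝ), x ^ 4 * exp (-b * x ^ 2) = 3 * √π / (8 * b ^ 2 * √b) := by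
  have h := integral_rpow_mul_exp_neg_mul_rpow (p := 2) (q := 4) (b := b)
    two_pos (by norm_num) hb
  simp_rw [Real.rpow_two, show ∀ x : ℝ, x ^ (4:ℝ) = x ^ (4:ℕ) from
    fun x => by rw [← Real.rpow_natCast x 4]; norm_num] at h
  rw [h]
  have hg : Real.Gamma (((4:ℝ)+1)/2) = 3 * √π / 4 := by
    rw [show ((4:ℝ)+1)/2 = (1/2 + 1) + 1 by norm_num, Real.Gamma_add_one (by norm_num),
      Real.Gamma_add_one (by norm_num), Real.Gamma_one_half_eq]; ring
  have hb' : b ^ (-((4:ℝ)+1)/2) = (b ^ 2 * √b)⁻¹ := by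
    rw [show (-((4:ℝ)+1)/2) = -(2 + 1/2) by norm_num, Real.rpow_neg hb.le,
      Real.rpow_add hb, ← Real.sqrt_eq_rpow, Real.rpow_two]
  have hsb : √b ≠ 0 := (Real.sqrt_pos.mpr hb).ne'
  rw [hg, hb']; field_simp
  ring

lemma integral_gaussianReal_eq' (m : ℝ) {v : ℝ≥0} (hv : v ≠ 0) (g : ℝ → ℝ) :
    ∫ x, g x ∂(gaussianReal m v) = ∫ x, gaussianPDFReal m v x * g x := by
  rw [gaussianReal_of_var_ne_zero _ hv]
  have : gaussianPDF m v = fun x => ((gaussianPDFReal m v x).toNNReal : ℝ≥0∞) := rfl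
  rw [this, integral_withDensity_eq_integral_smul
    ((measurable_gaussianPDFReal m v).real_toNNReal) g]
  congr 1 with x
  simp [NNReal.smul_def, Real.coe_toNNReal _ (gaussianPDFReal_nonneg m v x)]

lemma integrable_gaussianReal' {m : ℝ} {v : ℝ≥0} (hv : v ≠ 0) {g : ℝ → ℝ}
    (h : Integrable (fun x => gaussianPDFReal m v x * g x)) :
    Integrable g (gaussianReal m v) := by
  rw [gaussianReal_of_var_ne_zero _ hv]
  have : gaussianPDF m v = fun x => ((gaussianPDFReal m v x).toNNReal : ℝ≥0∞) := rfl
  rw [this, integrable_withDensity_iff_integrable_smul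
    ((measurable_gaussianPDFReal m v).real_toNNReal)]
  convert h using 2 with x
  case e'_5 => rfl
  simp [NNReal.smul_def, Real.coe_toNNReal _ (gaussianPDFReal_nonneg m v x)]

lemma pdf_mul_pow' {v : ℝ≥0} (hv : v ≠ 0) (n : ℕ) (x : ℝ) :
    gaussianPDFReal 0 v x * x ^ n = (√(2*π*v))⁻¹ * (x ^ n * exp (-(2*(v:ℝ))⁻¹ * x ^ 2)) := by
  have hv0 : (0:ℝ) < v := by positivity
  simp only [gaussianPDFReal, sub_zero]
  rw [show -(x:ℝ)^2/(2*v) = -(2*(v:ℝ))⁻¹ * x^2 by rw [div_eq_mul_inv]; ring]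
  ring

lemma integrable_pow_mul_gauss' {b : ℝ} (hb : 0 < b) (n : ℕ) :
    Integrable (fun x : ℝ => x ^ n * exp (-b * x ^ 2)) := by
  have := integrable_rpow_mul_exp_neg_mul_sq hb (s := (n:ℝ))
    ((by norm_num : (-1:ℝ) < 0).trans_le (Nat.cast_nonneg n))
  simpa [Real.rpow_natCast] using this

lemma pow_integrable_gaussianReal {v : ℝ≥0} (hv : v ≠ 0) (n : ℕ) :
    Integrable (fun x => x ^ n) (gaussianReal 0 v) := by
  have hv0 : (0:ℝ) < v := by positivity
  have hb : (0:ℝ) < (2*(v:ℝ))⁻¹ := by positivity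
  refine integrable_gaussianReal' hv ?_
  simp_rw [pdf_mul_pow' hv n]
  exact (integrable_pow_mul_gauss' hb n).const_mul _

lemma moment2' {v : ℝ≥0} (hv : v ≠ 0) :
    ∫ x, x ^ 2 ∂(gaussianReal 0 v) = v := by
  have hv0 : (0:ℝ) < v := by positivity
  have hb : (0:ℝ) < (2*(v:ℝ))⁻¹ := by positivity
  rw [integral_gaussianReal_eq' 0 hv]
  simp_rw [pdf_mul_pow' hv 2, integral_const_mul]
  rw [even_integral' (fun x => by ring_nf) (integrable_pow_mul_gauss' hb 2), G2' hb]
  rw [show 2*π*(v:ℝ) = π*(2*v) by ring, Real.sqrt_mul pi_pos.le, Real.sqrt_inv]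
  have hs2 : √(2*(v:ℝ)) * √(2*(v:ℝ)) = 2*v := Real.mul_self_sqrt (by positivity)
  have hs : √(2*(v:ℝ)) ≠ 0 := by positivity
  have hp : √π ≠ 0 := by positivity
  field_simp
  nlinarith [hs2]

lemma moment4' {v : ℝ≥0} (hv : v ≠ 0) :
    ∫ x, x ^ 4 ∂(gaussianReal 0 v) = 3 * (v:ℝ) ^ 2 := by
  have hv0 : (0:ℝ) < v := by positivity
  have hb : (0:ℝ) < (2*(v:ℝ))⁻¹ := by positivity
  rw [integral_gaussianReal_eq' 0 hv]
  simp_rw [pdf_mul_pow' hv 4, integral_const_mul]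
  rw [even_integral' (fun x => by ring_nf) (integrable_pow_mul_gauss' hb 4), G4' hb]
  rw [show 2*π*(v:ℝ) = π*(2*v) by ring, Real.sqrt_mul pi_pos.le, Real.sqrt_inv]
  have hs2 : √(2*(v:ℝ)) * √(2*(v:ℝ)) = 2*v := Real.mul_self_sqrt (by positivity)
  have hs : √(2*(v:ℝ)) ≠ 0 := by positivity
  have hp : √π ≠ 0 := by positivity
  field_simp
  nlinarith [hs2]

lemma pdf_mul_exp' (c m : ℝ) {v : ℝ≥0} (hv : v ≠ 0) (s : ℝ) :
    gaussianPDFReal m v s * exp (c * s)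
      = exp (c*m + c^2*(v:ℝ)/2) * gaussianPDFReal (m + c*v) v s := by
  have hv0 : (0:ℝ) < v := by positivity
  have key : -(s-m)^2/(2*(v:ℝ)) + c*s
      = (c*m + c^2*(v:ℝ)/2) + (-(s-(m+c*(v:ℝ)))^2/(2*(v:ℝ))) := by
    field_simp
    ring
  simp only [gaussianPDFReal]
  calc (√(2*π*(v:ℝ)))⁻¹ * exp (-(s-m)^2/(2*(v:ℝ))) * exp (c*s)
      = (√(2*π*(v:ℝ)))⁻¹ * exp (-(s-m)^2/(2*(v:ℝ)) + c*s) := by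
        rw [Real.exp_add]; ring
    _ = exp (c*m + c^2*(v:ℝ)/2) * ((√(2*π*(v:ℝ)))⁻¹ * exp (-(s-(m+c*(v:ℝ)))^2/(2*(v:ℝ)))) := by
        rw [key, Real.exp_add]; ring

lemma exp_integrable' (c m : ℝ) {v : ℝ≥0} (hv : v ≠ 0) :
    Integrable (fun s => exp (c * s)) (gaussianReal m v) := by
  refine integrable_gaussianReal' hv ?_
  simp_rw [pdf_mul_exp' c m hv]
  exact (integrable_gaussianPDFReal (m + c*v) v).const_mul _

lemma exp_moment' (c m : ℝ) {v : ℝ≥0} (hv : v ≠ 0) :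
    ∫ s, exp (c * s) ∂(gaussianReal m v) = exp (c*m + c^2*(v:ℝ)/2) := by
  rw [integral_gaussianReal_eq' m hv]
  simp_rw [pdf_mul_exp' c m hv, integral_const_mul,
    integral_gaussianPDFReal_eq_one (m + c*v) hv, mul_one]

lemma measurable_glg_kernel :
    Measurable (fun s : ℝ => gaussianReal 0 (Real.exp s).toNNReal) := by
  apply Measure.measurable_of_measurable_coe
  intro A hA
  have h1 : ∀ s : ℝ, gaussianReal 0 (Real.exp s).toNNReal A
      = ∫⁻ x in A, gaussianPDF 0 (Real.exp s).toNNReal x :=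
    fun s => gaussianReal_apply 0 (Real.toNNReal_pos.mpr (exp_pos s)).ne' A
  simp_rw [h1, gaussianPDF]
  have : Measurable (fun p : ℝ × ℝ =>
      ENNReal.ofReal (gaussianPDFReal 0 (Real.exp p.1).toNNReal p.2)) := by
    simp only [gaussianPDFReal, Real.coe_toNNReal _ (exp_pos _).le]
    apply ENNReal.measurable_ofReal.comp
    apply Measurable.mul
    · exact (measurable_fst.exp.const_mul (2*π)).sqrt.inv
    · exact (((measurable_snd.sub measurable_const).pow_const 2).neg.div
        (measurable_fst.exp.const_mul 2)).exp
  exact this.lintegral_prod_right'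

end Helpers

/-- The normalized kurtosis ratio of the Gaussian-log-Gaussian mixture distribution
with hidden-state mean `μ` and standard deviation `σ > 0` equals `exp σ²`. -/
theorem glg_kurtosis_ratio (μ : ℝ) (σ : ℝ≥0) (hσ : 0 < σ)
    (W : Measure ℝ)
    (hW : W = (gaussianReal μ (σ ^ 2)).bind
      (fun s => gaussianReal 0 (Real.exp s).toNNReal)) :
    (∫ x, x ^ 4 ∂W) / (3 * (∫ x, x ^ 2 ∂W) ^ 2) = Real.exp ((σ : ℝ) ^ 2) := by
  have hσ2 : (σ ^ 2 : ℝ≥0) ≠ 0 := pow_ne_zero 2 hσ.ne'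
  have hcoe : ((σ ^ 2 : ℝ≥0) : ℝ) = (σ:ℝ)^2 := by push_cast; ring
  have hvs : ∀ s : ℝ, (Real.exp s).toNNReal ≠ 0 :=
    fun s => (Real.toNNReal_pos.mpr (exp_pos s)).ne'
  have hvc : ∀ s : ℝ, (((Real.exp s).toNNReal : ℝ≥0) : ℝ) = Real.exp s :=
    fun s => Real.coe_toNNReal _ (exp_pos s).le
  have key : ∀ (n : ℕ) (c : ℝ), 0 ≤ c →
      (∀ v : ℝ≥0, v ≠ 0 → ∫ x, x ^ (2*n) ∂(gaussianReal 0 v) = c * (v:ℝ) ^ n) →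
      ∫ x, x ^ (2*n) ∂W = c * Real.exp ((n:ℝ) * μ + (n:ℝ)^2 * (σ:ℝ)^2 / 2) := by
    intro n c hc hmoment
    rw [hW]
    rw [integral_eq_lintegral_of_nonneg_ae
      (ae_of_all _ fun x => (by rw [pow_mul]; positivity : (0:ℝ) ≤ x ^ (2*n)))
      ((measurable_id'.pow_const (2*n)).aestronglyMeasurable)]
    rw [Measure.lintegral_bind measurable_glg_kernel.aemeasurable
      ((measurable_id'.pow_const (2*n)).ennreal_ofReal).aemeasurable]
    have hinner : ∀ s : ℝ, ∫⁻ x, ENNReal.ofReal (x ^ (2*n)) ∂(gaussianReal 0 (Real.exp s).toNNReal)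
        = ENNReal.ofReal (c * Real.exp ((n:ℝ) * s)) := by
      intro s
      rw [← ofReal_integral_eq_lintegral_ofReal
        (pow_integrable_gaussianReal (hvs s) (2*n))
        (ae_of_all _ fun x => by show (0:ℝ) ≤ x ^ (2*n); rw [pow_mul]; positivity)]
      rw [hmoment _ (hvs s), hvc s, ← Real.exp_nat_mul]
    simp_rw [hinner]
    rw [← ofReal_integral_eq_lintegral_ofReal
      ((exp_integrable' (n:ℝ) μ hσ2).const_mul c)
      (ae_of_all _ fun s => by positivity)]
    rw [integral_const_mul, exp_moment' (n:ℝ) μ hσ2, hcoe]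
    rw [ENNReal.toReal_ofReal (by positivity)]
  have h2 : ∫ x, x ^ 2 ∂W = Real.exp (μ + (σ:ℝ)^2 / 2) := by
    have := key 1 1 zero_le_one (fun v hv => by rw [moment2' hv]; ring)
    simpa using this
  have h4 : ∫ x, x ^ 4 ∂W = 3 * Real.exp (2*μ + 2*(σ:ℝ)^2) := by
    have := key 2 3 (by norm_num) (fun v hv => moment4' hv)
    norm_num at this
    rw [this]
    ring_nf
  rw [h2, h4]
  have e1 : (Real.exp (μ + (σ:ℝ)^2/2))^2 = Real.exp (2*μ + (σ:ℝ)^2) := by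
    rw [sq, ← Real.exp_add]; ring_nf
  rw [e1, mul_div_mul_left _ _ (by norm_num : (3:ℝ) ≠ 0), ← Real.exp_sub]
  ring_nf
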